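/- arXiv:2108.01818 — 2 statements merged into one kernel-verified Lean document; each statement's English description precedes it below -/
import Mathlib

section
/- In cylindrical coordinates (r, φ, z) with k > 0 a real constant, define B = −sin(z + ½kr²φ²)(r∇φ − krφ∇z), u = ∇r − rφ∇φ, and ζ = −cos(z + ½kr²φ²). Then on any simply connected open subset of ℝ³ avoiding the z-axis where φ is single-valued: ∇·B = 0, ∇·u = 0, B × u = ∇ζ, |B|² = sin²(z + ½kr²φ²)(1 + k²r²φ²), and u·∇|B|² = 0. Hence (B, u) is a local quasisymmetric configuration. -/
open MeasureTheory

noncomputable section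

/-- Vectors in ℝ³. -/
abbrev V3 := Fin 3 → ℝ

/-- Partial derivative ∂_i f at x. -/
noncomputable def pd (i : Fin 3) (f : V3 → ℝ) (x : V3) : ℝ :=
  fderiv ℝ f x (Pi.single i 1)

/-- Gradient ∇f. -/
noncomputable def grad (f : V3 → ℝ) (x : V3) : V3 := fun i => pd i f x

/-- Divergence ∇·B. -/
noncomputable def div3 (B : V3 → V3) (x : V3) : ℝ := ∑ i, pd i (fun y => B y i) x

/-- Cross product in ℝ³. -/
def cross (a b : V3) : V3 :=
  ![a 1 * b 2 - a 2 * b 1, a 2 * b 0 - a 0 * b 2, a 0 * b 1 - a 1 * b 0]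

/-- Dot product in ℝ³. -/
def dot (a b : V3) : ℝ := ∑ i, a i * b i

/-- Curl ∇×B. -/
noncomputable def curl (B : V3 → V3) (x : V3) : V3 :=
  ![pd 1 (fun y => B y 2) x - pd 2 (fun y => B y 1) x,
    pd 2 (fun y => B y 0) x - pd 0 (fun y => B y 2) x,
    pd 0 (fun y => B y 1) x - pd 1 (fun y => B y 0) x]

/-- Cylindrical radius r = √(x²+y²). -/
noncomputable def rr (x : V3) : ℝ := Real.sqrt (x 0 ^ 2 + x 1 ^ 2)


lemma coord_hasFDerivAt (i : Fin 3) (y : V3) :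
    HasFDerivAt (fun v : V3 => v i) ((ContinuousLinearMap.proj i : V3 →L[ℝ] ℝ)) y :=
  hasFDerivAt_apply (𝕜 := ℝ) i y

lemma sq_coord_hasFDerivAt (i : Fin 3) (y : V3) :
    HasFDerivAt (fun v : V3 => v i ^ 2)
      (y i • (ContinuousLinearMap.proj i : V3 →L[ℝ] ℝ)
        + y i • (ContinuousLinearMap.proj i : V3 →L[ℝ] ℝ)) y := by
  simp only [pow_two]; exact (coord_hasFDerivAt i y).mul (coord_hasFDerivAt i y)

lemma rr_deriv (y : V3) (hy : 0 < rr y) :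
    HasFDerivAt rr (fderiv ℝ rr y) y ∧
    ∀ j, fderiv ℝ rr y (Pi.single j 1) = ![y 0 / rr y, y 1 / rr y, 0] j := by
  have hqpos : 0 < y 0 ^ 2 + y 1 ^ 2 := Real.sqrt_pos.mp hy
  have hq := ((sq_coord_hasFDerivAt 0 y).add (sq_coord_hasFDerivAt 1 y))
  have hrr : HasFDerivAt rr _ y := hq.sqrt (ne_of_gt hqpos)
  refine ⟨hrr.differentiableAt.hasFDerivAt, ?_⟩
  intro j
  rw [hrr.fderiv]
  fin_cases j <;> simp [rr, Pi.single_apply] <;> try (field_simp [rr]; try ring)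

lemma rr_deriv' (U : Set V3) (hU : IsOpen U) (hax : ∀ x ∈ U, 0 < rr x)
    (φ : V3 → ℝ)
    (hbranch : ∀ x ∈ U, Real.cos (φ x) * rr x = x 0 ∧ Real.sin (φ x) * rr x = x 1)
    (y : V3) (hy : y ∈ U) :
    HasFDerivAt rr (fderiv ℝ rr y) y ∧
    ∀ j, fderiv ℝ rr y (Pi.single j 1) = ![Real.cos (φ y), Real.sin (φ y), 0] j := by
  obtain ⟨h1, h2⟩ := rr_deriv y (hax y hy)
  refine ⟨h1, fun j => ?_⟩
  rw [h2 j]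
  obtain ⟨hb1, hb2⟩ := hbranch y hy
  have hr := (hax y hy).ne'
  fin_cases j <;> simp <;> field_simp <;> linarith [hb1, hb2]

lemma phi_deriv (U : Set V3) (hU : IsOpen U) (hax : ∀ x ∈ U, 0 < rr x)
    (φ : V3 → ℝ) (hφ : ContDiffOn ℝ (⊤ : ℕ∞) φ U)
    (hbranch : ∀ x ∈ U, Real.cos (φ x) * rr x = x 0 ∧ Real.sin (φ x) * rr x = x 1)
    (y : V3) (hy : y ∈ U) :
    HasFDerivAt φ (fderiv ℝ φ y) y ∧
    ∀ j, fderiv ℝ φ y (Pi.single j 1) =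
      ![-Real.sin (φ y) / rr y, Real.cos (φ y) / rr y, 0] j := by
  obtain ⟨hdr, vr⟩ := rr_deriv' U hU hax φ hbranch y hy
  have hdφ : HasFDerivAt φ (fderiv ℝ φ y) y :=
    ((hφ.contDiffAt (hU.mem_nhds hy)).differentiableAt (by simp)).hasFDerivAt
  refine ⟨hdφ, fun j => ?_⟩
  set r := rr y with hrdef
  have hr : 0 < r := hax y hy
  set c := Real.cos (φ y) with hc
  set s := Real.sin (φ y) with hs
  have hcs : c ^ 2 + s ^ 2 = 1 := by rw [hc, hs]; exact Real.cos_sq_add_sin_sq _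
  -- derivative of cos(φ)·rr equals proj 0
  have hg1 : HasFDerivAt (fun v => Real.cos (φ v) * rr v)
      (c • fderiv ℝ rr y + r • (-s • fderiv ℝ φ y)) y := hdφ.cos.mul hdr
  have hg2 : HasFDerivAt (fun v => Real.sin (φ v) * rr v)
      (s • fderiv ℝ rr y + r • (c • fderiv ℝ φ y)) y := hdφ.sin.mul hdr
  have he1 : (fun v : V3 => v 0) =ᶠ[nhds y] (fun v => Real.cos (φ v) * rr v) :=
    Filter.eventuallyEq_of_mem (hU.mem_nhds hy) (fun v hv => ((hbranch v hv).1).symm)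
  have he2 : (fun v : V3 => v 1) =ᶠ[nhds y] (fun v => Real.sin (φ v) * rr v) :=
    Filter.eventuallyEq_of_mem (hU.mem_nhds hy) (fun v hv => ((hbranch v hv).2).symm)
  have hu1 : (c • fderiv ℝ rr y + r • (-s • fderiv ℝ φ y))
      = (ContinuousLinearMap.proj 0 : V3 →L[ℝ] ℝ) :=
    (hg1.congr_of_eventuallyEq he1).unique (coord_hasFDerivAt 0 y)
  have hu2 : (s • fderiv ℝ rr y + r • (c • fderiv ℝ φ y))
      = (ContinuousLinearMap.proj 1 : V3 →L[ℝ] ℝ) :=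
    (hg2.congr_of_eventuallyEq he2).unique (coord_hasFDerivAt 1 y)
  have hrne : r ≠ 0 := (hax y hy).ne'
  have key : ∀ j, r * fderiv ℝ φ y (Pi.single j 1)
      = -s * (Pi.single j 1 : V3) 0 + c * (Pi.single j 1 : V3) 1 := by
    intro i
    have e1 := congrArg (fun L : V3 →L[ℝ] ℝ => L (Pi.single i 1)) hu1
    have e2 := congrArg (fun L : V3 →L[ℝ] ℝ => L (Pi.single i 1)) hu2
    simp only [ContinuousLinearMap.add_apply, ContinuousLinearMap.smul_apply,
      ContinuousLinearMap.neg_apply, ContinuousLinearMap.proj_apply, smul_eq_mul] at e1 e2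
    rw [vr i] at e1 e2
    linear_combination (-s) * e1 + c * e2 - (r * fderiv ℝ φ y (Pi.single i 1)) * hcs
  fin_cases j
  · have k0 := key 0
    simp [Pi.single_apply] at k0 ⊢
    field_simp
    linarith [k0]
  · have k1 := key 1
    simp [Pi.single_apply] at k1 ⊢
    field_simp
    linarith [k1]
  · have k2 := key 2
    simp [Pi.single_apply] at k2 ⊢
    rcases k2 with h | h
    · exact absurd h hrne
    · exact h

set_option maxHeartbeats 1600000 in
/-- On a region off the z-axis where φ is a smooth single-valued branch of
the azimuthal angle, the fields B = −sin(z+½kr²φ²)(r∇φ − krφ∇z), u = ∇r − rφ∇φ and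
ζ = −cos(z+½kr²φ²) satisfy ∇·B = 0, ∇·u = 0, B×u = ∇ζ,
|B|² = sin²(z+½kr²φ²)(1+k²r²φ²) and u·∇|B|² = 0: a local quasisymmetric configuration. -/

theorem stmt_12 (k : ℝ) (hk : 0 < k) (U : Set V3) (hU : IsOpen U)
    (hax : ∀ x ∈ U, 0 < rr x)
    (φ : V3 → ℝ) (hφ : ContDiffOn ℝ (⊤ : ℕ∞) φ U)
    (hbranch : ∀ x ∈ U, Real.cos (φ x) * rr x = x 0 ∧ Real.sin (φ x) * rr x = x 1) :
    let θ : V3 → ℝ := fun y => y 2 + (1/2) * k * rr y ^ 2 * φ y ^ 2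
    let B : V3 → V3 := fun y => fun j =>
      -Real.sin (θ y) * (rr y * grad φ y j - k * rr y * φ y * grad (fun w => w 2) y j)
    let u : V3 → V3 := fun y => fun j => grad rr y j - rr y * φ y * grad φ y j
    let ζ : V3 → ℝ := fun y => -Real.cos (θ y)
    ∀ x ∈ U, div3 B x = 0 ∧ div3 u x = 0
      ∧ (∀ j, cross (B x) (u x) j = grad ζ x j)
      ∧ dot (B x) (B x) = Real.sin (θ x) ^ 2 * (1 + k ^ 2 * rr x ^ 2 * φ x ^ 2)
      ∧ dot (u x) (grad (fun y => dot (B y) (B y)) x) = 0 := by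
  intro θ B u ζ x hx
  obtain ⟨hdr, vr⟩ := rr_deriv' U hU hax φ hbranch x hx
  obtain ⟨hdφ, vφ⟩ := phi_deriv U hU hax φ hφ hbranch x hx
  have hrx : 0 < rr x := hax x hx
  have hrne : rr x ≠ 0 := hrx.ne'
  have hcs : Real.cos (φ x) ^ 2 + Real.sin (φ x) ^ 2 = 1 := Real.cos_sq_add_sin_sq _
  have hr2 : HasFDerivAt (fun y => rr y ^ 2)
      (rr x • fderiv ℝ rr x + rr x • fderiv ℝ rr x) x := by
    simp only [pow_two]; exact hdr.mul hdr
  have hφ2 : HasFDerivAt (fun y => φ y ^ 2)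
      (φ x • fderiv ℝ φ x + φ x • fderiv ℝ φ x) x := by
    simp only [pow_two]; exact hdφ.mul hdφ
  have hθd : HasFDerivAt θ
      ((ContinuousLinearMap.proj 2 : V3 →L[ℝ] ℝ) +
        (((1:ℝ)/2 * k * rr x ^ 2) • (φ x • fderiv ℝ φ x + φ x • fderiv ℝ φ x)
          + (φ x ^ 2) • (((1:ℝ)/2 * k) • (rr x • fderiv ℝ rr x + rr x • fderiv ℝ rr x)))) x :=
    (coord_hasFDerivAt 2 x).add ((hr2.const_mul ((1:ℝ)/2 * k)).mul hφ2)
  have hθ' : HasFDerivAt θ (fderiv ℝ θ x) x := hθd.differentiableAt.hasFDerivAt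
  have vθ : ∀ j, fderiv ℝ θ x (Pi.single j 1) =
      ![k * rr x * φ x * (φ x * Real.cos (φ x) - Real.sin (φ x)),
        k * rr x * φ x * (φ x * Real.sin (φ x) + Real.cos (φ x)), 1] j := by
    intro j
    rw [hθd.fderiv]
    simp only [ContinuousLinearMap.add_apply, ContinuousLinearMap.smul_apply,
      ContinuousLinearMap.proj_apply, smul_eq_mul, vr j, vφ j]
    fin_cases j <;>
      simp [Pi.single_apply, -mul_eq_zero, -neg_eq_zero, -mul_eq_mul_left_iff,
        -mul_eq_mul_right_iff] <;>
      (try ring) <;> (try (field_simp; ring))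
  have hgradz : ∀ (y : V3) (j : Fin 3), grad (fun w : V3 => w 2) y j = (Pi.single j 1 : V3) 2 := by
    intro y j
    simp only [grad, pd, (coord_hasFDerivAt 2 y).fderiv, ContinuousLinearMap.proj_apply]
  have hBeq : ∀ y ∈ U, B y = ![Real.sin (θ y) * Real.sin (φ y),
      -(Real.sin (θ y) * Real.cos (φ y)), Real.sin (θ y) * (k * (rr y * φ y))] := by
    intro y hy
    obtain ⟨_, vφy⟩ := phi_deriv U hU hax φ hφ hbranch y hy
    have hry : rr y ≠ 0 := (hax y hy).ne'
    funext j
    rw [show B y j = -Real.sin (θ y) * (rr y * grad φ y j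
      - k * rr y * φ y * grad (fun w => w 2) y j) from rfl, hgradz y j]
    simp only [grad, pd, vφy j]
    fin_cases j <;>
      simp [Pi.single_apply, -mul_eq_zero, -neg_eq_zero, -mul_eq_mul_left_iff,
        -mul_eq_mul_right_iff] <;>
      (try ring) <;> (try (field_simp; try ring))
  have hueq : ∀ y ∈ U, u y = ![Real.cos (φ y) + φ y * Real.sin (φ y),
      Real.sin (φ y) - φ y * Real.cos (φ y), 0] := by
    intro y hy
    obtain ⟨_, vφy⟩ := phi_deriv U hU hax φ hφ hbranch y hy
    obtain ⟨_, vry⟩ := rr_deriv' U hU hax φ hbranch y hy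
    have hry : rr y ≠ 0 := (hax y hy).ne'
    funext j
    rw [show u y j = grad rr y j - rr y * φ y * grad φ y j from rfl]
    simp only [grad, pd, vφy j, vry j]
    fin_cases j <;>
      simp [Pi.single_apply, -mul_eq_zero, -neg_eq_zero, -mul_eq_mul_left_iff,
        -mul_eq_mul_right_iff] <;>
      (try ring) <;> (try (field_simp; try ring))
  have hBB : ∀ y ∈ U, dot (B y) (B y)
      = Real.sin (θ y) ^ 2 * (1 + k ^ 2 * (rr y ^ 2 * φ y ^ 2)) := by
    intro y hy
    rw [dot, Fin.sum_univ_three, hBeq y hy]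
    simp only [Matrix.cons_val_zero, Matrix.cons_val_one, Matrix.head_cons,
      Matrix.cons_val_two, Matrix.tail_cons]
    linear_combination Real.sin (θ y) ^ 2 * (Real.cos_sq_add_sin_sq (φ y))
  have pdcongr : ∀ (i : Fin 3) (f g : V3 → ℝ), (∀ y ∈ U, f y = g y) → pd i f x = pd i g x := by
    intro i f g h
    unfold pd
    rw [Filter.EventuallyEq.fderiv_eq (Filter.eventuallyEq_of_mem (hU.mem_nhds hx) h)]
  refine ⟨?_, ?_, ?_, ?_, ?_⟩
  · -- div B = 0
    have hF0 : HasFDerivAt (fun y => Real.sin (θ y) * Real.sin (φ y))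
        (Real.sin (θ x) • (Real.cos (φ x) • fderiv ℝ φ x)
          + Real.sin (φ x) • (Real.cos (θ x) • fderiv ℝ θ x)) x := hθ'.sin.mul hdφ.sin
    have hF1 : HasFDerivAt (fun y => -(Real.sin (θ y) * Real.cos (φ y)))
        (-(Real.sin (θ x) • (-Real.sin (φ x) • fderiv ℝ φ x)
          + Real.cos (φ x) • (Real.cos (θ x) • fderiv ℝ θ x))) x := (hθ'.sin.mul hdφ.cos).neg
    have hF2 : HasFDerivAt (fun y => Real.sin (θ y) * (k * (rr y * φ y)))
        (Real.sin (θ x) • (k • (rr x • fderiv ℝ φ x + φ x • fderiv ℝ rr x))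
          + (k * (rr x * φ x)) • (Real.cos (θ x) • fderiv ℝ θ x)) x :=
      hθ'.sin.mul ((hdr.mul hdφ).const_mul k)
    unfold div3
    rw [Fin.sum_univ_three,
      pdcongr 0 _ (fun y => Real.sin (θ y) * Real.sin (φ y))
        (fun y hy => by rw [hBeq y hy]; simp),
      pdcongr 1 _ (fun y => -(Real.sin (θ y) * Real.cos (φ y)))
        (fun y hy => by rw [hBeq y hy]; simp),
      pdcongr 2 _ (fun y => Real.sin (θ y) * (k * (rr y * φ y)))
        (fun y hy => by rw [hBeq y hy]; simp)]
    unfold pd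
    rw [hF0.fderiv, hF1.fderiv, hF2.fderiv]
    simp only [ContinuousLinearMap.add_apply, ContinuousLinearMap.smul_apply,
      ContinuousLinearMap.neg_apply, smul_eq_mul, vθ 0, vθ 1, vθ 2, vφ 0, vφ 1, vφ 2,
      vr 0, vr 1, vr 2]
    simp only [Matrix.cons_val_zero, Matrix.cons_val_one, Matrix.head_cons,
      Matrix.cons_val_two, Matrix.tail_cons]
    field_simp
    linear_combination (-(Real.cos (θ x)) * k * rr x ^ 2 * φ x) * hcs
  · -- div u = 0
    have hFu0 : HasFDerivAt (fun y => Real.cos (φ y) + φ y * Real.sin (φ y))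
        ((-Real.sin (φ x) • fderiv ℝ φ x)
          + (φ x • (Real.cos (φ x) • fderiv ℝ φ x) + Real.sin (φ x) • fderiv ℝ φ x)) x :=
      hdφ.cos.add (hdφ.mul hdφ.sin)
    have hFu1 : HasFDerivAt (fun y => Real.sin (φ y) - φ y * Real.cos (φ y))
        ((Real.cos (φ x) • fderiv ℝ φ x)
          - (φ x • (-Real.sin (φ x) • fderiv ℝ φ x) + Real.cos (φ x) • fderiv ℝ φ x)) x :=
      hdφ.sin.sub (hdφ.mul hdφ.cos)
    unfold div3
    rw [Fin.sum_univ_three,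
      pdcongr 0 _ (fun y => Real.cos (φ y) + φ y * Real.sin (φ y))
        (fun y hy => by rw [hueq y hy]; simp),
      pdcongr 1 _ (fun y => Real.sin (φ y) - φ y * Real.cos (φ y))
        (fun y hy => by rw [hueq y hy]; simp),
      pdcongr 2 _ (fun _ => (0:ℝ))
        (fun y hy => by rw [hueq y hy]; simp)]
    unfold pd
    rw [hFu0.fderiv, hFu1.fderiv, fderiv_fun_const]
    simp only [ContinuousLinearMap.add_apply, ContinuousLinearMap.smul_apply,
      ContinuousLinearMap.sub_apply, ContinuousLinearMap.neg_apply, smul_eq_mul,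
      vφ 0, vφ 1, Pi.zero_apply, ContinuousLinearMap.zero_apply]
    simp only [Matrix.cons_val_zero, Matrix.cons_val_one, Matrix.head_cons]
    field_simp
    ring
  · -- cross = grad ζ
    have hζ : HasFDerivAt (fun y => -Real.cos (θ y))
        (-((-Real.sin (θ x)) • fderiv ℝ θ x)) x := hθ'.cos.neg
    have hgz : ∀ j, grad ζ x j = Real.sin (θ x) * (fderiv ℝ θ x (Pi.single j 1)) := by
      intro j
      rw [show grad ζ x j = fderiv ℝ ζ x (Pi.single j 1) from rfl,
        show fderiv ℝ ζ x = -((-Real.sin (θ x)) • fderiv ℝ θ x) from hζ.fderiv]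
      simp
    intro j
    rw [hgz j, vθ j, hBeq x hx, hueq x hx]
    fin_cases j <;>
      simp [cross, -mul_eq_zero, -neg_eq_zero, -mul_eq_mul_left_iff,
        -mul_eq_mul_right_iff] <;>
      (try ring) <;> (try (linear_combination Real.sin (θ x) * hcs)) <;>
      (try (linear_combination Real.sin (x 2 + k * rr x ^ 2 * φ x ^ 2 * (1 / 2)) * hcs))
  · rw [hBB x hx]; ring
  · -- u · grad |B|^2 = 0
    have hinner : HasFDerivAt (fun y => 1 + k ^ 2 * (rr y ^ 2 * φ y ^ 2))
        ((k ^ 2) • ((rr x ^ 2) • (φ x • fderiv ℝ φ x + φ x • fderiv ℝ φ x)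
          + (φ x ^ 2) • (rr x • fderiv ℝ rr x + rr x • fderiv ℝ rr x))) x :=
      ((hr2.mul hφ2).const_mul (k ^ 2)).const_add 1
    have hsin2 : HasFDerivAt (fun y => Real.sin (θ y) ^ 2)
        (Real.sin (θ x) • (Real.cos (θ x) • fderiv ℝ θ x)
          + Real.sin (θ x) • (Real.cos (θ x) • fderiv ℝ θ x)) x := by
      simp only [pow_two]; exact hθ'.sin.mul hθ'.sin
    have hNG : HasFDerivAt (fun y => Real.sin (θ y) ^ 2 * (1 + k ^ 2 * (rr y ^ 2 * φ y ^ 2)))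
        (Real.sin (θ x) ^ 2 • ((k ^ 2) • ((rr x ^ 2) • (φ x • fderiv ℝ φ x + φ x • fderiv ℝ φ x)
            + (φ x ^ 2) • (rr x • fderiv ℝ rr x + rr x • fderiv ℝ rr x)))
          + (1 + k ^ 2 * (rr x ^ 2 * φ x ^ 2)) •
            (Real.sin (θ x) • (Real.cos (θ x) • fderiv ℝ θ x)
              + Real.sin (θ x) • (Real.cos (θ x) • fderiv ℝ θ x))) x := hsin2.mul hinner
    have hgrad : ∀ j, grad (fun y => dot (B y) (B y)) x j
        = fderiv ℝ (fun y => Real.sin (θ y) ^ 2 * (1 + k ^ 2 * (rr y ^ 2 * φ y ^ 2))) x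
            (Pi.single j 1) := by
      intro j
      rw [show grad (fun y => dot (B y) (B y)) x j
          = pd j (fun y => dot (B y) (B y)) x from rfl,
        pdcongr j _ (fun y => Real.sin (θ y) ^ 2 * (1 + k ^ 2 * (rr y ^ 2 * φ y ^ 2)))
          (fun y hy => hBB y hy)]
      rfl
    rw [dot, Fin.sum_univ_three, hueq x hx, hgrad 0, hgrad 1, hgrad 2, hNG.fderiv]
    simp only [ContinuousLinearMap.add_apply, ContinuousLinearMap.smul_apply,
      smul_eq_mul, vθ 0, vθ 1, vθ 2, vφ 0, vφ 1, vφ 2, vr 0, vr 1, vr 2]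
    simp only [Matrix.cons_val_zero, Matrix.cons_val_one, Matrix.head_cons,
      Matrix.cons_val_two, Matrix.tail_cons]
    field_simp
    ring
end
end

section
/- In cylindrical coordinates, let h(r,φ) solve ∂h/∂φ = r ρ^{-1}(α(r) − rφ) where ρ^{-1} is the inverse of a smooth strictly monotone function ρ : ℝ → ℝ and α is smooth. Set ζ = z − h, η = (1/r)∂h/∂φ, B = f(ζ)∇r×∇ζ, and u = ∇ζ×∇(ρ(η)) for smooth f. Then ∇·B = 0, ∇·u = 0, B·∇ζ = u·∇ζ = 0, ∇r×∇ζ·∇(ρ(η)) = 1, and consequently B×u = ∇g where g′ = f; furthermore u·∇|B|² = 0 whenever |B|² is a function of ζ and η alone. -/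
open MeasureTheory

noncomputable section

-- basic pd lemmas
lemma pd_congr {p q : V3 → ℝ} {x : V3} (h : p =ᶠ[nhds x] q) (i : Fin 3) :
    pd i p x = pd i q x := by
  unfold pd; rw [h.fderiv_eq]

lemma pd_sub {p q : V3 → ℝ} {x : V3} (hp : DifferentiableAt ℝ p x)
    (hq : DifferentiableAt ℝ q x) (i : Fin 3) :
    pd i (fun y => p y - q y) x = pd i p x - pd i q x := by
  unfold pd; rw [fderiv_fun_sub hp hq]; simp

lemma pd_mul {p q : V3 → ℝ} {x : V3} (hp : DifferentiableAt ℝ p x)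
    (hq : DifferentiableAt ℝ q x) (i : Fin 3) :
    pd i (fun y => p y * q y) x = pd i p x * q x + p x * pd i q x := by
  unfold pd; rw [fderiv_fun_mul hp hq]; simp; ring

lemma pd_coord (i j : Fin 3) (x : V3) :
    pd i (fun y : V3 => y j) x = Pi.single (M := fun _ => ℝ) i 1 j := by
  unfold pd
  have : (fun y : V3 => y j) = ⇑(ContinuousLinearMap.proj (R := ℝ) (φ := fun _ : Fin 3 => ℝ) j) := rfl
  rw [this, (ContinuousLinearMap.proj (R := ℝ) (φ := fun _ : Fin 3 => ℝ) j).fderiv]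
  rfl

lemma pd_comp {c : ℝ → ℝ} {c' : ℝ} {s : V3 → ℝ} {x : V3}
    (hc : HasDerivAt c c' (s x)) (hs : DifferentiableAt ℝ s x) (i : Fin 3) :
    pd i (fun y => c (s y)) x = c' * pd i s x := by
  unfold pd
  have h2 := (hc.comp_hasFDerivAt x hs.hasFDerivAt).fderiv
  have : (fun y => c (s y)) = c ∘ s := rfl
  rw [this, h2]
  simp

lemma pd_comp2 {G : ℝ → ℝ → ℝ} {s t : V3 → ℝ} {x : V3}
    (hG : DifferentiableAt ℝ (fun p : ℝ × ℝ => G p.1 p.2) (s x, t x))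
    (hs : DifferentiableAt ℝ s x) (ht : DifferentiableAt ℝ t x) (i : Fin 3) :
    pd i (fun y => G (s y) (t y)) x =
      pd i s x * fderiv ℝ (fun p : ℝ × ℝ => G p.1 p.2) (s x, t x) (1, 0)
      + pd i t x * fderiv ℝ (fun p : ℝ × ℝ => G p.1 p.2) (s x, t x) (0, 1) := by
  unfold pd
  have hpair : HasFDerivAt (fun y => (s y, t y))
      ((fderiv ℝ s x).prod (fderiv ℝ t x)) x := HasFDerivAt.prodMk hs.hasFDerivAt ht.hasFDerivAt
  have h2 := (hG.hasFDerivAt.comp x hpair).fderiv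
  have h3 : (fun y => G (s y) (t y)) = (fun p : ℝ × ℝ => G p.1 p.2) ∘ (fun y => (s y, t y)) := rfl
  rw [h3, h2]
  set D := fderiv ℝ (fun p : ℝ × ℝ => G p.1 p.2) (s x, t x)
  have : ((fderiv ℝ s x) (Pi.single i 1), (fderiv ℝ t x) (Pi.single i 1)) =
      (fderiv ℝ s x) (Pi.single i 1) • ((1:ℝ), (0:ℝ)) +
      (fderiv ℝ t x) (Pi.single i 1) • ((0:ℝ), (1:ℝ)) := by
    simp [Prod.ext_iff]
  simp only [ContinuousLinearMap.coe_comp', Function.comp_apply,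
    ContinuousLinearMap.prod_apply, this, map_add, _root_.map_smul, smul_eq_mul]
section
variable {a b : V3 → ℝ} {x : V3}

lemma pd_diffAt (ha : ContDiffAt ℝ (⊤:ℕ∞) a x) (j : Fin 3) :
    DifferentiableAt ℝ (fun y => pd j a y) x := by
  have h1 : ContDiffAt ℝ 1 (fderiv ℝ a) x := by
    apply ha.fderiv_right
    exact WithTop.coe_le_coe.mpr le_top
  have h2 : DifferentiableAt ℝ (fderiv ℝ a) x := h1.differentiableAt one_ne_zero
  exact (ContinuousLinearMap.apply ℝ ℝ (Pi.single j 1)).differentiableAt.comp x h2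

lemma pd_symm (ha : ContDiffAt ℝ (⊤:ℕ∞) a x) (i j : Fin 3) :
    pd i (fun y => pd j a y) x = pd j (fun y => pd i a y) x := by
  have h1 : ContDiffAt ℝ 1 (fderiv ℝ a) x := by
    apply ha.fderiv_right; exact WithTop.coe_le_coe.mpr le_top
  have hL : HasFDerivAt (fderiv ℝ a) (fderiv ℝ (fderiv ℝ a) x) x :=
    (h1.differentiableAt one_ne_zero).hasFDerivAt
  have hev : ∀ᶠ y in nhds x, HasFDerivAt a (fderiv ℝ a y) y := by
    have h2 : ∀ᶠ y in nhds x, ContDiffAt ℝ 1 a y :=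
      (ha.of_le (by exact_mod_cast le_top)).eventually (by simp)
    exact h2.mono fun y hy => (hy.differentiableAt one_ne_zero).hasFDerivAt
  have hsymm := second_derivative_symmetric_of_eventually hev hL
  have key : ∀ k l : Fin 3, pd k (fun y => pd l a y) x =
      fderiv ℝ (fderiv ℝ a) x (Pi.single k 1) (Pi.single l 1) := by
    intro k l
    have hc : HasFDerivAt (fun y => fderiv ℝ a y (Pi.single l 1))
        ((ContinuousLinearMap.apply ℝ ℝ ((Pi.single l 1 : V3))).comp
          (fderiv ℝ (fderiv ℝ a) x)) x :=
      (ContinuousLinearMap.apply ℝ ℝ ((Pi.single l 1 : V3))).hasFDerivAt.comp x hL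
    have : pd k (fun y => pd l a y) x =
        fderiv ℝ (fun y => fderiv ℝ a y (Pi.single l 1)) x (Pi.single k 1) := rfl
    rw [this, hc.fderiv]; rfl
  rw [key, key, hsymm]

lemma div_cross_grad (ha : ContDiffAt ℝ (⊤:ℕ∞) a x) (hb : ContDiffAt ℝ (⊤:ℕ∞) b x) :
    div3 (fun y => cross (grad a y) (grad b y)) x = 0 := by
  have hpa : ∀ j, DifferentiableAt ℝ (fun y => pd j a y) x := pd_diffAt ha
  have hpb : ∀ j, DifferentiableAt ℝ (fun y => pd j b y) x := pd_diffAt hb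
  have hc : ∀ (j k l m : Fin 3) (i : Fin 3),
      pd i (fun y => pd j a y * pd k b y - pd l a y * pd m b y) x =
      (pd i (fun y => pd j a y) x * pd k b x + pd j a x * pd i (fun y => pd k b y) x)
      - (pd i (fun y => pd l a y) x * pd m b x + pd l a x * pd i (fun y => pd m b y) x) := by
    intro j k l m i
    rw [pd_sub ((hpa j).fun_mul (hpb k)) ((hpa l).fun_mul (hpb m)), pd_mul (hpa j) (hpb k),
      pd_mul (hpa l) (hpb m)]
  have e0 : (fun y => cross (grad a y) (grad b y) 0)
      = fun y => pd 1 a y * pd 2 b y - pd 2 a y * pd 1 b y := by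
    funext y; simp [cross, grad]
  have e1 : (fun y => cross (grad a y) (grad b y) 1)
      = fun y => pd 2 a y * pd 0 b y - pd 0 a y * pd 2 b y := by
    funext y; simp [cross, grad]
  have e2 : (fun y => cross (grad a y) (grad b y) 2)
      = fun y => pd 0 a y * pd 1 b y - pd 1 a y * pd 0 b y := by
    funext y; simp [cross, grad]
  rw [div3, Fin.sum_univ_three, e0, e1, e2, hc 1 2 2 1, hc 2 0 0 2, hc 0 1 1 0,
    pd_symm ha 0 1, pd_symm ha 0 2, pd_symm ha 1 2, pd_symm hb 0 1, pd_symm hb 0 2,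
    pd_symm hb 1 2]
  ring

-- pure algebra
lemma dot_cross_right (a b : V3) : dot (cross a b) b = 0 := by
  simp [dot, cross, Fin.sum_univ_three]; ring
lemma dot_cross_left (a b : V3) : dot (cross a b) a = 0 := by
  simp [dot, cross, Fin.sum_univ_three]; ring
lemma cross_cross' (a b w : V3) (j : Fin 3) :
    cross (cross a b) (cross b w) j = dot (cross a b) w * b j := by
  fin_cases j <;> simp [dot, cross, Fin.sum_univ_three] <;> ring

-- rr facts
lemma contDiffAt_rr {x : V3} (hx : 0 < rr x) : ContDiffAt ℝ (⊤:ℕ∞) rr x := by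
  have hs : ContDiff ℝ (⊤:ℕ∞) (fun y : V3 => y 0 ^ 2 + y 1 ^ 2) := by
    apply ContDiff.add <;>
      exact ((ContinuousLinearMap.proj (R := ℝ) (φ := fun _ : Fin 3 => ℝ) _).contDiff).pow 2
  have hne : x 0 ^ 2 + x 1 ^ 2 ≠ 0 := by
    intro h; rw [rr, h, Real.sqrt_zero] at hx; exact lt_irrefl _ hx
  exact (Real.contDiffAt_sqrt hne).comp x hs.contDiffAt

lemma diffAt_rr {x : V3} (hx : 0 < rr x) : DifferentiableAt ℝ rr x :=
  (contDiffAt_rr hx).differentiableAt (by simp)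

lemma rr_sq {x : V3} : rr x ^ 2 = x 0 ^ 2 + x 1 ^ 2 :=
  Real.sq_sqrt (by positivity)

lemma pd_rr {x : V3} (hx : 0 < rr x) (i : Fin 3) :
    pd i rr x = (x 0 * Pi.single (M := fun _ => ℝ) i 1 0
      + x 1 * Pi.single (M := fun _ => ℝ) i 1 1) / rr x := by
  have hne : x 0 ^ 2 + x 1 ^ 2 ≠ 0 := by
    intro h; rw [rr, h, Real.sqrt_zero] at hx; exact lt_irrefl _ hx
  have hd0 : DifferentiableAt ℝ (fun y : V3 => y 0 ^ 2) x := by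
    apply DifferentiableAt.pow
    exact (ContinuousLinearMap.proj (R := ℝ) (φ := fun _ : Fin 3 => ℝ) 0).differentiableAt
  have hd1 : DifferentiableAt ℝ (fun y : V3 => y 1 ^ 2) x := by
    apply DifferentiableAt.pow
    exact (ContinuousLinearMap.proj (R := ℝ) (φ := fun _ : Fin 3 => ℝ) 1).differentiableAt
  have hsq : ∀ j : Fin 3, pd i (fun y : V3 => y j ^ 2) x
      = 2 * x j * Pi.single (M := fun _ => ℝ) i 1 j := by
    intro j
    have := pd_comp (c := fun t => t ^ 2) (c' := 2 * x j) (s := fun y : V3 => y j) (x := x)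
      (by simpa using hasDerivAt_pow 2 (x j))
      (ContinuousLinearMap.proj (R := ℝ) (φ := fun _ : Fin 3 => ℝ) j).differentiableAt i
    rw [this, pd_coord]
  have hsd : pd i (fun y : V3 => y 0 ^ 2 + y 1 ^ 2) x
      = 2 * x 0 * Pi.single (M := fun _ => ℝ) i 1 0 + 2 * x 1 * Pi.single (M := fun _ => ℝ) i 1 1 := by
    have hadd : pd i (fun y : V3 => y 0 ^ 2 + y 1 ^ 2) x
        = pd i (fun y : V3 => y 0 ^ 2) x + pd i (fun y : V3 => y 1 ^ 2) x := by
      unfold pd; rw [fderiv_fun_add hd0 hd1]; simp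
    rw [hadd, hsq 0, hsq 1]
  have hrr : pd i rr x = (1 / (2 * rr x)) * pd i (fun y : V3 => y 0 ^ 2 + y 1 ^ 2) x := by
    have := pd_comp (c := Real.sqrt) (c' := 1 / (2 * Real.sqrt (x 0 ^ 2 + x 1 ^ 2)))
      (s := fun y : V3 => y 0 ^ 2 + y 1 ^ 2) (x := x)
      (Real.hasDerivAt_sqrt hne) (hd0.add hd1) i
    exact this
  rw [hrr, hsd]
  field_simp

lemma dot_expand (a b : V3) : dot a b = a 0 * b 0 + a 1 * b 1 + a 2 * b 2 := by
  simp [dot, Fin.sum_univ_three]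

lemma cross_smul_left (c : ℝ) (a b : V3) (j : Fin 3) :
    cross (fun k => c * a k) b j = c * cross a b j := by
  fin_cases j <;> simp [cross] <;> ring

lemma div3_congr {B C : V3 → V3} {x : V3} (h : ∀ᶠ y in nhds x, B y = C y) :
    div3 B x = div3 C x := by
  unfold div3
  refine Finset.sum_congr rfl fun i _ => ?_
  exact pd_congr (h.mono fun y hy => by rw [hy]) i

lemma cinf_diffAt {f : V3 → ℝ} {x : V3} (h : ContDiffAt ℝ (⊤:ℕ∞) f x) :
    DifferentiableAt ℝ f x :=
  h.differentiableAt (by simp)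

/-- With h solving ∂h/∂φ = r ρ⁻¹(α(r) − rφ), ζ = z − h,
η = (1/r)∂h/∂φ = ρ⁻¹(α − rφ), B = f(ζ)∇r×∇ζ and u = ∇ζ×∇(ρ(η)): one has ∇·B = 0,
∇·u = 0, B·∇ζ = u·∇ζ = 0, the Jacobian condition ∇r×∇ζ·∇(ρ∘η) = 1, hence B×u = ∇(g∘ζ)
with g′ = f; and u·∇|B|² = 0 whenever |B|² is a (smooth) function of ζ and η alone. -/
theorem stmt_19 (U : Set V3) (hU : IsOpen U) (hax : ∀ x ∈ U, 0 < rr x)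
    (φ : V3 → ℝ) (hφ : ContDiffOn ℝ (⊤ : ℕ∞) φ U)
    (hbranch : ∀ x ∈ U, Real.cos (φ x) * rr x = x 0 ∧ Real.sin (φ x) * rr x = x 1)
    (ρ ρinv : ℝ → ℝ) (hρ : ContDiff ℝ (⊤ : ℕ∞) ρ) (hρinv : ContDiff ℝ (⊤ : ℕ∞) ρinv)
    (hρmono : StrictMono ρ)
    (hli : Function.LeftInverse ρinv ρ) (hri : Function.RightInverse ρinv ρ)
    (α : ℝ → ℝ) (hα : ContDiff ℝ (⊤ : ℕ∞) α)
    (H : ℝ → ℝ → ℝ) (hH : ContDiff ℝ (⊤ : ℕ∞) (fun p : ℝ × ℝ => H p.1 p.2))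
    (hHode : ∀ r φv : ℝ, HasDerivAt (H r) (r * ρinv (α r - r * φv)) φv)
    (f g : ℝ → ℝ) (hf : ContDiff ℝ (⊤ : ℕ∞) f) (hg : ∀ t, HasDerivAt g (f t) t) :
    let h : V3 → ℝ := fun y => H (rr y) (φ y)
    let ζ : V3 → ℝ := fun y => y 2 - h y
    let η : V3 → ℝ := fun y => ρinv (α (rr y) - rr y * φ y)
    let B : V3 → V3 := fun y => fun j => f (ζ y) * cross (grad rr y) (grad ζ y) j
    let u : V3 → V3 := fun y => cross (grad ζ y) (grad (fun w => ρ (η w)) y)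
    ∀ x ∈ U,
      div3 B x = 0
      ∧ div3 u x = 0
      ∧ dot (B x) (grad ζ x) = 0
      ∧ dot (u x) (grad ζ x) = 0
      ∧ dot (cross (grad rr x) (grad ζ x)) (grad (fun w => ρ (η w)) x) = 1
      ∧ (∀ j, cross (B x) (u x) j = grad (fun y => g (ζ y)) x j)
      ∧ (∀ F : ℝ → ℝ → ℝ, ContDiff ℝ (⊤ : ℕ∞) (fun p : ℝ × ℝ => F p.1 p.2) →
          (∀ y ∈ U, dot (B y) (B y) = F (ζ y) (η y)) →
          dot (u x) (grad (fun y => dot (B y) (B y)) x) = 0) := by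
  intro h ζ η B u x hx
  have hh : h = fun y => H (rr y) (φ y) := rfl
  have hζ : ζ = fun y => y 2 - h y := rfl
  have hη : η = fun y => ρinv (α (rr y) - rr y * φ y) := rfl
  have hBv : B = fun y => fun j => f (ζ y) * cross (grad rr y) (grad ζ y) j := rfl
  have huv : u = fun y => cross (grad ζ y) (grad (fun w => ρ (η w)) y) := rfl
  -- smoothness conversions
  have hH' : ContDiff ℝ (⊤:ℕ∞) (fun p : ℝ × ℝ => H p.1 p.2) := hH.of_le (by simp)
  have hα' : ContDiff ℝ (⊤:ℕ∞) α := hα.of_le (by simp)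
  have hρinv' : ContDiff ℝ (⊤:ℕ∞) ρinv := hρinv.of_le (by simp)
  have hgC : ContDiff ℝ (⊤:ℕ∞) g := by
    rw [contDiff_infty_iff_deriv]
    refine ⟨fun t => (hg t).differentiableAt, ?_⟩
    have hd : deriv g = f := funext fun t => (hg t).deriv
    rw [hd]; exact hf.of_le (by simp)
  have hρη_eq : (fun w => ρ (η w)) = fun y => α (rr y) - rr y * φ y :=
    funext fun w => hri _
  -- pointwise facts on U
  have hUy : ∀ y ∈ U, U ∈ nhds y := fun y hy => hU.mem_nhds hy
  have cdrr : ∀ y ∈ U, ContDiffAt ℝ (⊤:ℕ∞) rr y := fun y hy => contDiffAt_rr (hax y hy)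
  have cdφ : ∀ y ∈ U, ContDiffAt ℝ (⊤:ℕ∞) φ y := fun y hy =>
    (hφ.contDiffAt (hUy y hy)).of_le (by simp)
  have cdh : ∀ y ∈ U, ContDiffAt ℝ (⊤:ℕ∞) h y := fun y hy => by
    rw [hh]
    exact hH'.contDiffAt.comp y ((cdrr y hy).prodMk (cdφ y hy))
  have cdζ : ∀ y ∈ U, ContDiffAt ℝ (⊤:ℕ∞) ζ y := fun y hy => by
    rw [hζ]
    exact (((ContinuousLinearMap.proj (R := ℝ) (φ := fun _ : Fin 3 => ℝ)
      2).contDiff).contDiffAt.sub (cdh y hy))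
  have cdρη : ∀ y ∈ U, ContDiffAt ℝ (⊤:ℕ∞) (fun w => ρ (η w)) y := fun y hy => by
    rw [hρη_eq]
    exact ((hα'.contDiffAt.comp y (cdrr y hy)).sub ((cdrr y hy).mul (cdφ y hy)))
  have dζ : ∀ y ∈ U, DifferentiableAt ℝ ζ y := fun y hy => cinf_diffAt (cdζ y hy)
  have hr : 0 < rr x := hax x hx
  have hrne : rr x ≠ 0 := ne_of_gt hr
  have hφx : DifferentiableAt ℝ φ x := cinf_diffAt (cdφ x hx)
  have hrrx : DifferentiableAt ℝ rr x := cinf_diffAt (cdrr x hx)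
  -- gradient of g ∘ ζ
  have hgζ : ∀ y ∈ U, ∀ i, pd i (fun w => g (ζ w)) y = f (ζ y) * pd i ζ y := fun y hy i =>
    pd_comp (hg (ζ y)) (dζ y hy) i
  -- === pd formulas at x ===
  have hdcos : DifferentiableAt ℝ (fun y => Real.cos (φ y)) x :=
    (Real.differentiable_cos.differentiableAt).comp x hφx
  have hdsin : DifferentiableAt ℝ (fun y => Real.sin (φ y)) x :=
    (Real.differentiable_sin.differentiableAt).comp x hφx
  have hb1 : (fun y => Real.cos (φ y) * rr y) =ᶠ[nhds x] (fun y : V3 => y 0) :=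
    Filter.eventually_of_mem (hUy x hx) fun y hy => (hbranch y hy).1
  have hb2 : (fun y => Real.sin (φ y) * rr y) =ᶠ[nhds x] (fun y : V3 => y 1) :=
    Filter.eventually_of_mem (hUy x hx) fun y hy => (hbranch y hy).2
  have key1 : ∀ i, (-Real.sin (φ x) * pd i φ x) * rr x + Real.cos (φ x) * pd i rr x
      = Pi.single (M := fun _ => ℝ) i 1 0 := by
    intro i
    have h1 := pd_mul (p := fun y => Real.cos (φ y)) (q := rr) hdcos hrrx i
    have h2 : pd i (fun y => Real.cos (φ y)) x = -Real.sin (φ x) * pd i φ x := by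
      have := pd_comp (Real.hasDerivAt_cos (φ x)) hφx i
      rw [this]
    have h3 := pd_congr hb1 i
    rw [pd_coord] at h3
    rw [h2] at h1
    linear_combination h3 - h1
  have key2 : ∀ i, (Real.cos (φ x) * pd i φ x) * rr x + Real.sin (φ x) * pd i rr x
      = Pi.single (M := fun _ => ℝ) i 1 1 := by
    intro i
    have h1 := pd_mul (p := fun y => Real.sin (φ y)) (q := rr) hdsin hrrx i
    have h2 : pd i (fun y => Real.sin (φ y)) x = Real.cos (φ x) * pd i φ x := by
      have := pd_comp (Real.hasDerivAt_sin (φ x)) hφx i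
      rw [this]
    have h3 := pd_congr hb2 i
    rw [pd_coord] at h3
    rw [h2] at h1
    linear_combination h3 - h1
  have hpyth := Real.sin_sq_add_cos_sq (φ x)
  have hx0 : x 0 = Real.cos (φ x) * rr x := ((hbranch x hx).1).symm
  have hx1 : x 1 = Real.sin (φ x) * rr x := ((hbranch x hx).2).symm
  have hP : ∀ i, pd i φ x * rr x = Real.cos (φ x) * Pi.single (M := fun _ => ℝ) i 1 1
      - Real.sin (φ x) * Pi.single (M := fun _ => ℝ) i 1 0 := by
    intro i
    linear_combination (-Real.sin (φ x)) * key1 i + Real.cos (φ x) * key2 i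
      - (pd i φ x * rr x) * hpyth
  have hR : ∀ i, pd i rr x = Real.cos (φ x) * Pi.single (M := fun _ => ℝ) i 1 0
      + Real.sin (φ x) * Pi.single (M := fun _ => ℝ) i 1 1 := by
    intro i
    rw [pd_rr hr, hx0, hx1]
    field_simp
  have P0 : pd 0 φ x = -Real.sin (φ x) / rr x := by
    have := hP 0; simp at this; field_simp at this ⊢; linear_combination this
  have P1 : pd 1 φ x = Real.cos (φ x) / rr x := by
    have := hP 1; simp at this; field_simp at this ⊢; linear_combination this
  have P2 : pd 2 φ x = 0 := by
    have := hP 2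
    simp at this
    rcases this with h | h
    · exact h
    · exact absurd h hrne
  have R0 : pd 0 rr x = Real.cos (φ x) := by have := hR 0; simpa using this
  have R1 : pd 1 rr x = Real.sin (φ x) := by have := hR 1; simpa using this
  have R2 : pd 2 rr x = 0 := by have := hR 2; simpa using this
  -- pd of h and ζ
  have hdh : DifferentiableAt ℝ h x := cinf_diffAt (cdh x hx)
  have hD2 : fderiv ℝ (fun p : ℝ × ℝ => H p.1 p.2) (rr x, φ x) (0, 1)
      = rr x * ρinv (α (rr x) - rr x * φ x) := by
    have hcurve : HasDerivAt (fun t : ℝ => ((rr x : ℝ), t)) (0, 1) (φ x) :=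
      (hasDerivAt_const _ _).prodMk (hasDerivAt_id _)
    have hcomp := ((hH.differentiable (by simp)).differentiableAt.hasFDerivAt).comp_hasDerivAt
      (φ x) hcurve
    exact hcomp.unique (hHode (rr x) (φ x))
  have hhpd : ∀ i, pd i h x = pd i rr x * fderiv ℝ (fun p : ℝ × ℝ => H p.1 p.2) (rr x, φ x) (1, 0)
      + pd i φ x * (rr x * ρinv (α (rr x) - rr x * φ x)) := by
    intro i
    rw [hh, ← hD2]
    exact pd_comp2 ((hH.differentiable (by simp)).differentiableAt) hrrx hφx i
  have hζpd : ∀ i, pd i ζ x = Pi.single (M := fun _ => ℝ) i 1 2 - pd i h x := by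
    intro i
    rw [hζ]
    rw [pd_sub (p := fun y : V3 => y 2) (q := h)
      (ContinuousLinearMap.proj (R := ℝ) (φ := fun _ : Fin 3 => ℝ) 2).differentiableAt
      hdh, pd_coord]
  -- pd of ρ∘η
  have hWpd : ∀ i, pd i (fun w => ρ (η w)) x = deriv α (rr x) * pd i rr x
      - (pd i rr x * φ x + rr x * pd i φ x) := by
    intro i
    rw [hρη_eq]
    have hd1 : DifferentiableAt ℝ (fun y => α (rr y)) x :=
      ((hα.differentiable (by simp)) (rr x)).comp x hrrx
    have hd2 : DifferentiableAt ℝ (fun y => rr y * φ y) x := hrrx.mul hφx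
    rw [pd_sub hd1 hd2 i, pd_mul hrrx hφx i,
      pd_comp ((hα.differentiable (by simp)) (rr x)).hasDerivAt hrrx i]
  -- the Jacobian
  have jac : dot (cross (grad rr x) (grad ζ x)) (grad (fun w => ρ (η w)) x) = 1 := by
    simp only [dot, cross, grad, Fin.sum_univ_three]
    simp only [Matrix.cons_val_zero, Matrix.cons_val_one, Matrix.head_cons,
      Matrix.cons_val_two, Matrix.tail_cons]
    rw [hWpd 0, hWpd 1, hWpd 2, hζpd 0, hζpd 1, hζpd 2, hhpd 0, hhpd 1, hhpd 2,
      P0, P1, P2, R0, R1, R2]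
    simp [Pi.single_apply]
    field_simp
    linear_combination hpyth
  refine ⟨?_, ?_, ?_, ?_, ?_, ?_, ?_⟩
  · -- div B = 0
    have hBC : ∀ᶠ y in nhds x, B y
        = (fun y => cross (grad rr y) (grad (fun w => g (ζ w)) y)) y := by
      refine Filter.eventually_of_mem (hUy x hx) fun y hy => ?_
      funext j
      have e1 : ∀ i, grad (fun w => g (ζ w)) y i = f (ζ y) * grad ζ y i := fun i => hgζ y hy i
      rw [hBv]
      fin_cases j <;> simp [cross, e1] <;> ring
    rw [div3_congr hBC]
    exact div_cross_grad (cdrr x hx) ((hgC.contDiffAt).comp x (cdζ x hx))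
  · -- div u = 0
    rw [huv]
    exact div_cross_grad (cdζ x hx) (cdρη x hx)
  · -- B ⟂ ∇ζ
    rw [hBv]
    simp [dot, cross, Fin.sum_univ_three]
    ring
  · -- u ⟂ ∇ζ
    rw [huv]
    simp [dot, cross, Fin.sum_univ_three]
    ring
  · -- Jacobian
    exact jac
  · -- B × u = ∇(g∘ζ)
    intro j
    have hBx : B x = fun k => f (ζ x) * cross (grad rr x) (grad ζ x) k := by rw [hBv]
    have hux : u x = cross (grad ζ x) (grad (fun w => ρ (η w)) x) := by rw [huv]
    rw [hBx, hux, cross_smul_left, cross_cross', jac]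
    show f (ζ x) * (1 * pd j ζ x) = pd j (fun y => g (ζ y)) x
    rw [hgζ x hx j]; ring
  · -- u ⋅ ∇|B|² = 0
    intro F hFs hFeq
    have hq : (fun y => dot (B y) (B y)) =ᶠ[nhds x] (fun y => F (ζ y) (η y)) :=
      Filter.eventually_of_mem (hUy x hx) hFeq
    have ds' : DifferentiableAt ℝ (fun y => α (rr y) - rr y * φ y) x :=
      cinf_diffAt (by rw [← hρη_eq]; exact cdρη x hx)
    have hηpd : ∀ i, pd i η x
        = deriv ρinv (α (rr x) - rr x * φ x) * pd i (fun w => ρ (η w)) x := by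
      intro i
      have h1 : pd i η x = deriv ρinv (α (rr x) - rr x * φ x)
          * pd i (fun y => α (rr y) - rr y * φ y) x := by
        rw [hη]
        exact pd_comp ((hρinv.differentiable (by simp) _).hasDerivAt) ds' i
      rw [h1, ← hρη_eq]
    have hFpd : ∀ i, pd i (fun y => dot (B y) (B y)) x =
        pd i ζ x * fderiv ℝ (fun p : ℝ × ℝ => F p.1 p.2) (ζ x, η x) (1, 0)
        + pd i η x * fderiv ℝ (fun p : ℝ × ℝ => F p.1 p.2) (ζ x, η x) (0, 1) := by
      intro i
      rw [pd_congr hq i]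
      have dη : DifferentiableAt ℝ η x := by
        rw [hη]
        exact ((hρinv.differentiable (by simp)) _).comp x ds'
      exact pd_comp2 ((hFs.differentiable (by simp)).differentiableAt) (dζ x hx) dη i
    rw [huv]
    rw [dot_expand]
    simp only [cross, grad, Matrix.cons_val_zero, Matrix.cons_val_one, Matrix.head_cons,
      Matrix.cons_val_two, Matrix.tail_cons]
    rw [hFpd 0, hFpd 1, hFpd 2, hηpd 0, hηpd 1, hηpd 2]
    ring
end
end
end
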